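/- arXiv:2506.11741 — 2 statements merged into one kernel-verified Lean document; each statement's English description precedes it below -/
import Mathlib

section
/- For any density matrix ρ on ℂ^d with orthonormal eigendecomposition (ψ_i, λ_i), and any Hermitian matrix H on ℂ^d with largest eigenvalue λmax(H) and smallest eigenvalue λmin(H), the quantum Fisher information satisfies F_Q(ρ, H) ≤ (λmax(H) − λmin(H))². (This establishes the paper's normalization claim that the coherence-task fidelity q₃ = F_Q(ρ, H)/F_Q^max(d), with F_Q^max(d) = (λmax(H) − λmin(H))², lies in [0,1] for all finite-dimensional states.) -/
open Matrix BigOperators ComplexOrder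

/-- Quantum Fisher information computed from an orthonormal eigendecomposition
`(ψ i, lam i)` of a density matrix, with respect to the Hermitian matrix `H`. -/
noncomputable def QFI {d : ℕ} (ψ : Fin d → Fin d → ℂ) (lam : Fin d → ℝ)
    (H : Matrix (Fin d) (Fin d) ℂ) : ℝ :=
  2 * ∑ i : Fin d, ∑ j : Fin d,
    if 0 < lam i + lam j then
      ((lam i - lam j) ^ 2 / (lam i + lam j)) * ‖star (ψ i) ⬝ᵥ H *ᵥ ψ j‖ ^ 2
    else 0

/-!
Shifting `H` by a real multiple of the identity does not change `F_Q`, since the diagonal terms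
carry the factor `(λᵢ - λᵢ)² = 0`. With `c` the midpoint of the spectrum of `H`, the operator
`H - c` has norm at most `r = (λmax(H) - λmin(H)) / 2`. As
`(λᵢ - λⱼ)² / (λᵢ + λⱼ) ≤ λᵢ + λⱼ`, symmetrising the double sum gives
`F_Q ≤ 4 ∑ᵢ λᵢ ∑ⱼ |⟨ψⱼ, (H - c) ψᵢ⟩|² ≤ 4 ∑ᵢ λᵢ ‖(H - c) ψᵢ‖² ≤ 4 r² ∑ᵢ λᵢ = 4 r²`,
by Bessel's inequality and `tr ρ = 1`.
-/

open scoped InnerProductSpace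

theorem sq_sub_div_add_le_add {a b : ℝ} (ha : 0 ≤ a) (hb : 0 ≤ b) :
    (a - b) ^ 2 / (a + b) ≤ a + b :=
  div_le_of_le_mul₀ (by positivity) (by positivity) (by nlinarith)

section Matrix

variable {𝕜 n : Type*} [RCLike 𝕜] [Fintype n]

theorem Matrix.IsHermitian.star_star_dotProduct_mulVec {A : Matrix n n 𝕜} (hA : A.IsHermitian)
    (x y : n → 𝕜) : star (star x ⬝ᵥ A *ᵥ y) = star y ⬝ᵥ A *ᵥ x := by
  rw [star_dotProduct, star_star, star_mulVec, hA.eq, ← dotProduct_mulVec]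

theorem Matrix.IsHermitian.norm_sub_smul_one_mulVec_sq_le [DecidableEq n] {A : Matrix n n 𝕜}
    (hA : A.IsHermitian) {c r : ℝ} (hspec : ∀ i, |hA.eigenvalues i - c| ≤ r) (v : n → 𝕜) :
    ‖WithLp.toLp 2 ((A - (c : 𝕜) • 1) *ᵥ v)‖ ^ 2 ≤ r ^ 2 * ‖WithLp.toLp 2 v‖ ^ 2 := by
  set b := hA.eigenvectorBasis
  rw [← b.sum_sq_norm_inner_right, ← b.sum_sq_norm_inner_right, Finset.mul_sum]
  refine Finset.sum_le_sum fun k _ => ?_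
  have hk : ⟪b k, WithLp.toLp 2 ((A - (c : 𝕜) • 1) *ᵥ v)⟫_𝕜
      = ((hA.eigenvalues k - c : ℝ) : 𝕜) * ⟪b k, WithLp.toLp 2 v⟫_𝕜 := by
    have hAb : star (b k).ofLp ⬝ᵥ A *ᵥ v = hA.eigenvalues k * (star (b k).ofLp ⬝ᵥ v) := by
      rw [← hA.star_star_dotProduct_mulVec, hA.mulVec_eigenvectorBasis, dotProduct_smul,
        star_smul, ← star_dotProduct]
      simp [b, RCLike.real_smul_eq_coe_mul]
    rw [← WithLp.toLp_ofLp (p := 2) (b k)]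
    simp only [EuclideanSpace.inner_toLp_toLp, dotProduct_comm _ (star _), sub_mulVec,
      smul_mulVec, one_mulVec, dotProduct_sub, dotProduct_smul, hAb]
    push_cast
    ring
  rw [hk, norm_mul, mul_pow, RCLike.norm_ofReal]
  gcongr
  exact hspec k

variable {ψ : n → n → 𝕜}

theorem orthonormal_toLp_of_star_dotProduct [DecidableEq n]
    (horth : ∀ i j, star (ψ i) ⬝ᵥ ψ j = if i = j then 1 else 0) :
    Orthonormal 𝕜 fun i => WithLp.toLp 2 (ψ i) := by
  rw [orthonormal_iff_ite]
  intro i j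
  rw [EuclideanSpace.inner_toLp_toLp, dotProduct_comm, horth]

theorem Orthonormal.sum_norm_star_dotProduct_sq_le
    (hψ : Orthonormal 𝕜 fun i => WithLp.toLp 2 (ψ i)) (v : n → 𝕜) :
    ∑ i, ‖star (ψ i) ⬝ᵥ v‖ ^ 2 ≤ ‖WithLp.toLp 2 v‖ ^ 2 := by
  simpa only [EuclideanSpace.inner_toLp_toLp, dotProduct_comm v] using
    hψ.sum_inner_products_le (WithLp.toLp 2 v) (s := Finset.univ)

theorem Orthonormal.trace_eq_sum_star_dotProduct_mulVec [DecidableEq n]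
    (hψ : Orthonormal 𝕜 fun i => WithLp.toLp 2 (ψ i)) (A : Matrix n n 𝕜) :
    A.trace = ∑ i, star (ψ i) ⬝ᵥ A *ᵥ ψ i := by
  let b := OrthonormalBasis.mk hψ
    (hψ.linearIndependent.span_eq_top_of_card_eq_finrank' (by simp)).ge
  have htr : LinearMap.trace 𝕜 _ (toLpLin 2 2 A) = A.trace := by
    rw [toLpLin_eq_toLin, trace_toLin_eq]
  rw [← htr, LinearMap.trace_eq_sum_inner _ b]
  simp [b, toLpLin_toLp, EuclideanSpace.inner_toLp_toLp, dotProduct_comm]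

end Matrix

theorem QFI_sub_smul_one {d : ℕ} {ψ : Fin d → Fin d → ℂ}
    (horth : ∀ i j, i ≠ j → star (ψ i) ⬝ᵥ ψ j = 0) (lam : Fin d → ℝ)
    (H : Matrix (Fin d) (Fin d) ℂ) (c : ℂ) :
    QFI ψ lam (H - c • 1) = QFI ψ lam H := by
  unfold QFI
  congr 1
  refine Finset.sum_congr rfl fun i _ => Finset.sum_congr rfl fun j _ => ?_
  rcases eq_or_ne i j with rfl | hij
  · simp
  · rw [sub_mulVec, smul_mulVec, one_mulVec, dotProduct_sub, dotProduct_smul, horth i j hij,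
      smul_zero, sub_zero]

theorem QFI_le_four_mul_sum {d : ℕ} (ψ : Fin d → Fin d → ℂ) {lam : Fin d → ℝ}
    (hlam : ∀ i, 0 ≤ lam i) {H : Matrix (Fin d) (Fin d) ℂ} (hH : H.IsHermitian) :
    QFI ψ lam H ≤ 4 * ∑ i, lam i * ∑ j, ‖star (ψ j) ⬝ᵥ H *ᵥ ψ i‖ ^ 2 := by
  set a : Fin d → Fin d → ℝ := fun i j => ‖star (ψ i) ⬝ᵥ H *ᵥ ψ j‖ ^ 2
  have ha : ∀ i j, a j i = a i j := fun i j => by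
    simp only [a, ← hH.star_star_dotProduct_mulVec (ψ i), norm_star]
  calc QFI ψ lam H ≤ 2 * ∑ i, ∑ j, (lam i + lam j) * a i j := by
        unfold QFI
        gcongr with i _ j _
        split_ifs
        · exact mul_le_mul_of_nonneg_right (sq_sub_div_add_le_add (hlam i) (hlam j))
            (sq_nonneg _)
        · exact mul_nonneg (add_nonneg (hlam i) (hlam j)) (sq_nonneg _)
    _ = 2 * (∑ i, ∑ j, lam i * a i j + ∑ i, ∑ j, lam j * a i j) := by
        simp only [add_mul, Finset.sum_add_distrib]
    _ = 2 * (∑ i, lam i * ∑ j, a j i + ∑ i, lam i * ∑ j, a j i) := by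
        rw [Finset.sum_comm (f := fun i j => lam j * a i j)]
        simp only [ha, Finset.mul_sum]
    _ = 4 * ∑ i, lam i * ∑ j, a j i := by ring

theorem QFI_le_spectral_width_sq_general {d : ℕ}
    (ρ : Matrix (Fin d) (Fin d) ℂ)
    (htr : ρ.trace = 1)
    (ψb : Fin d → Fin d → ℂ) (lam : Fin d → ℝ)
    (horth : ∀ i j, star (ψb i) ⬝ᵥ ψb j = if i = j then 1 else 0)
    (heig : ∀ i, ρ *ᵥ ψb i = (lam i : ℂ) • ψb i)
    (hnn : ∀ i, 0 ≤ lam i)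
    (H : Matrix (Fin d) (Fin d) ℂ) (hH : H.IsHermitian)
    (lmax lmin : ℝ)
    (hmax : ∀ i, hH.eigenvalues i ≤ lmax)
    (hmin : ∀ i, lmin ≤ hH.eigenvalues i) :
    QFI ψb lam H ≤ (lmax - lmin) ^ 2 := by
  set c := (lmax + lmin) / 2 with hc
  set r := (lmax - lmin) / 2 with hr
  have hψ := orthonormal_toLp_of_star_dotProduct horth
  have hspec : ∀ k, |hH.eigenvalues k - c| ≤ r := fun k =>
    abs_le.2 ⟨by linarith [hmin k], by linarith [hmax k]⟩
  have hrow : ∀ i, ∑ j, ‖star (ψb j) ⬝ᵥ (H - (c : ℂ) • 1) *ᵥ ψb i‖ ^ 2 ≤ r ^ 2 := fun i =>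
    calc _ ≤ ‖WithLp.toLp 2 ((H - (c : ℂ) • 1) *ᵥ ψb i)‖ ^ 2 :=
          hψ.sum_norm_star_dotProduct_sq_le _
      _ ≤ r ^ 2 * ‖WithLp.toLp 2 (ψb i)‖ ^ 2 := hH.norm_sub_smul_one_mulVec_sq_le hspec _
      _ = r ^ 2 := by rw [hψ.1 i, one_pow, mul_one]
  have hlam : ∑ i, lam i = 1 := by
    have := hψ.trace_eq_sum_star_dotProduct_mulVec ρ
    simp only [heig, dotProduct_smul, horth, if_pos, smul_eq_mul, mul_one, htr] at this
    exact_mod_cast this.symm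
  calc QFI ψb lam H = QFI ψb lam (H - (c : ℂ) • 1) :=
        (QFI_sub_smul_one (fun i j h => by rw [horth, if_neg h]) lam H c).symm
    _ ≤ 4 * ∑ i, lam i * ∑ j, ‖star (ψb j) ⬝ᵥ (H - (c : ℂ) • 1) *ᵥ ψb i‖ ^ 2 :=
        QFI_le_four_mul_sum ψb hnn (hH.sub (isHermitian_one.smul (Complex.conj_ofReal c)))
    _ ≤ 4 * ∑ i, lam i * r ^ 2 := by gcongr with i; exacts [hnn i, hrow i]
    _ = (lmax - lmin) ^ 2 := by rw [← Finset.sum_mul, hlam]; ring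

/-- The quantum Fisher information of any density matrix with respect to a Hermitian
observable `H` is bounded by the squared spectral width `(λmax(H) − λmin(H))²`. -/
theorem QFI_le_spectral_width_sq {d : ℕ}
    (ρ : Matrix (Fin d) (Fin d) ℂ)
    (hherm : ρ.IsHermitian) (hpos : ρ.PosSemidef) (htr : ρ.trace = 1)
    (ψb : Fin d → Fin d → ℂ) (lam : Fin d → ℝ)
    (horth : ∀ i j, star (ψb i) ⬝ᵥ ψb j = if i = j then 1 else 0)
    (heig : ∀ i, ρ *ᵥ ψb i = (lam i : ℂ) • ψb i)
    (hnn : ∀ i, 0 ≤ lam i)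
    (H : Matrix (Fin d) (Fin d) ℂ) (hH : H.IsHermitian)
    (lmax lmin : ℝ)
    (hmax_mem : ∃ i, hH.eigenvalues i = lmax) (hmax : ∀ i, hH.eigenvalues i ≤ lmax)
    (hmin_mem : ∃ i, hH.eigenvalues i = lmin) (hmin : ∀ i, lmin ≤ hH.eigenvalues i) :
    QFI ψb lam H ≤ (lmax - lmin) ^ 2 :=
  QFI_le_spectral_width_sq_general ρ htr ψb lam horth heig hnn H hH lmax lmin hmax hmin
end

section
/- Let ψ ∈ ℂ^{dA} ⊗ ℂ^{dB} ⊗ ℂ^{dC} be a unit vector and ρ = ψψ⋆ the associated pure tripartite density matrix (indexed by Fin dA × Fin dB × Fin dC). Let ρ_A, ρ_B, ρ_C, ρ_{AB}, ρ_{AC} denote the reduced density matrices obtained by partial traces, and define the quantum mutual information I(A:B) = S(ρ_A) + S(ρ_B) − S(ρ_{AB}) and I(A:C) = S(ρ_A) + S(ρ_C) − S(ρ_{AC}). Then I(A:B) + I(A:C) ≤ 2·S(ρ_A). (This is the entropic monogamy bound invoked in the entropic consistency step of the proof of Theorem 1.) -/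
open Matrix BigOperators

variable {dA dB dC : ℕ}

/-- Reduced state on `A` of a tripartite matrix. -/
noncomputable def redA (ρ : Matrix (Fin dA × Fin dB × Fin dC) (Fin dA × Fin dB × Fin dC) ℂ) :
    Matrix (Fin dA) (Fin dA) ℂ :=
  fun a a' => ∑ b : Fin dB, ∑ c : Fin dC, ρ (a, b, c) (a', b, c)

/-- Reduced state on `B` of a tripartite matrix. -/
noncomputable def redB (ρ : Matrix (Fin dA × Fin dB × Fin dC) (Fin dA × Fin dB × Fin dC) ℂ) :
    Matrix (Fin dB) (Fin dB) ℂ :=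
  fun b b' => ∑ a : Fin dA, ∑ c : Fin dC, ρ (a, b, c) (a, b', c)

/-- Reduced state on `C` of a tripartite matrix. -/
noncomputable def redC (ρ : Matrix (Fin dA × Fin dB × Fin dC) (Fin dA × Fin dB × Fin dC) ℂ) :
    Matrix (Fin dC) (Fin dC) ℂ :=
  fun c c' => ∑ a : Fin dA, ∑ b : Fin dB, ρ (a, b, c) (a, b, c')

/-- Reduced state on `AB` of a tripartite matrix. -/
noncomputable def redAB (ρ : Matrix (Fin dA × Fin dB × Fin dC) (Fin dA × Fin dB × Fin dC) ℂ) :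
    Matrix (Fin dA × Fin dB) (Fin dA × Fin dB) ℂ :=
  fun p q => ∑ c : Fin dC, ρ (p.1, p.2, c) (q.1, q.2, c)

/-- Reduced state on `AC` of a tripartite matrix. -/
noncomputable def redAC (ρ : Matrix (Fin dA × Fin dB × Fin dC) (Fin dA × Fin dB × Fin dC) ℂ) :
    Matrix (Fin dA × Fin dC) (Fin dA × Fin dC) ℂ :=
  fun p q => ∑ b : Fin dB, ρ (p.1, b, p.2) (q.1, b, q.2)

/-- Von Neumann entropy of a Hermitian matrix: `S(ρ) = −∑ᵢ λᵢ log λᵢ`. -/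
noncomputable def vnEntropy {m : Type*} [Fintype m] [DecidableEq m]
    {ρ : Matrix m m ℂ} (h : ρ.IsHermitian) : ℝ :=
  ∑ i, Real.negMulLog (h.eigenvalues i)

/-!
Writing `ψ` as a matrix `M` from `AB` to `C`, the marginals are `ρ_AB = M Mᴴ` and
`ρ_C = Mᵀ (Mᵀ)ᴴ = (Mᴴ M)ᵀ`, so they have the same nonzero spectrum and `S(AB) = S(C)`;
likewise `S(AC) = S(B)`. Hence `I(A:B) + I(A:C) = 2 S(A)`.
-/

open Polynomial

section Entropy

variable {m n : Type*} [Fintype m] [DecidableEq m] [Fintype n] [DecidableEq n]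

lemma vnEntropy_eq_sum_roots_charpoly {A : Matrix m m ℂ} (hA : A.IsHermitian) :
    vnEntropy hA = (A.charpoly.roots.map fun z : ℂ => Real.negMulLog z.re).sum := by
  rw [hA.roots_charpoly_eq_eigenvalues, Multiset.map_map, vnEntropy, Finset.sum_eq_multiset_sum]
  simp [Function.comp_def]

/-- The extra roots are zeros, and `negMulLog 0 = 0`. -/
lemma vnEntropy_eq_of_X_pow_mul_charpoly_eq {A : Matrix m m ℂ} {B : Matrix n n ℂ}
    (hA : A.IsHermitian) (hB : B.IsHermitian)
    (h : X ^ Fintype.card n * A.charpoly = X ^ Fintype.card m * B.charpoly) :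
    vnEntropy hA = vnEntropy hB := by
  have hroots := congrArg (fun p : ℂ[X] => (p.roots.map fun z : ℂ => Real.negMulLog z.re).sum) h
  simpa [roots_mul, (charpoly_monic _).ne_zero, Multiset.nsmul_singleton,
    vnEntropy_eq_sum_roots_charpoly] using hroots

lemma vnEntropy_mul_conjTranspose_eq_transpose (M : Matrix m n ℂ)
    {A : Matrix m m ℂ} {B : Matrix n n ℂ} (hA : A.IsHermitian) (hB : B.IsHermitian)
    (hAM : A = M * Mᴴ) (hBM : B = Mᵀ * Mᵀᴴ) :
    vnEntropy hA = vnEntropy hB := by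
  subst hAM hBM
  refine vnEntropy_eq_of_X_pow_mul_charpoly_eq hA hB ?_
  rw [charpoly_mul_comm', ← charpoly_transpose (Mᴴ * M), transpose_mul,
    ← conjTranspose_transpose_eq_transpose_conjTranspose]

end Entropy

section PureState

def matrixAB_C (ψ : Fin dA × Fin dB × Fin dC → ℂ) : Matrix (Fin dA × Fin dB) (Fin dC) ℂ :=
  of fun p c => ψ (p.1, p.2, c)

def matrixAC_B (ψ : Fin dA × Fin dB × Fin dC → ℂ) : Matrix (Fin dA × Fin dC) (Fin dB) ℂ :=
  of fun p b => ψ (p.1, b, p.2)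

variable (ψ : Fin dA × Fin dB × Fin dC → ℂ)

lemma redAB_vecMulVec : redAB (vecMulVec ψ (star ψ)) = matrixAB_C ψ * (matrixAB_C ψ)ᴴ := by
  ext p q
  simp [redAB, matrixAB_C, mul_apply, vecMulVec_apply]

lemma redC_vecMulVec :
    redC (vecMulVec ψ (star ψ)) = (matrixAB_C ψ)ᵀ * (matrixAB_C ψ)ᵀᴴ := by
  ext c c'
  simp [redC, matrixAB_C, mul_apply, vecMulVec_apply, Fintype.sum_prod_type]

lemma redAC_vecMulVec : redAC (vecMulVec ψ (star ψ)) = matrixAC_B ψ * (matrixAC_B ψ)ᴴ := by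
  ext p q
  simp [redAC, matrixAC_B, mul_apply, vecMulVec_apply]

lemma redB_vecMulVec :
    redB (vecMulVec ψ (star ψ)) = (matrixAC_B ψ)ᵀ * (matrixAC_B ψ)ᵀᴴ := by
  ext b b'
  simp [redB, matrixAC_B, mul_apply, vecMulVec_apply, Fintype.sum_prod_type]

end PureState

theorem mutual_information_monogamy_general
    (ψ : Fin dA × Fin dB × Fin dC → ℂ)
    (hA : (redA (vecMulVec ψ (star ψ))).IsHermitian)
    (hB : (redB (vecMulVec ψ (star ψ))).IsHermitian)
    (hC : (redC (vecMulVec ψ (star ψ))).IsHermitian)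
    (hAB : (redAB (vecMulVec ψ (star ψ))).IsHermitian)
    (hAC : (redAC (vecMulVec ψ (star ψ))).IsHermitian) :
    (vnEntropy hA + vnEntropy hB - vnEntropy hAB) +
      (vnEntropy hA + vnEntropy hC - vnEntropy hAC) ≤ 2 * vnEntropy hA := by
  have hABC : vnEntropy hAB = vnEntropy hC :=
    vnEntropy_mul_conjTranspose_eq_transpose _ hAB hC (redAB_vecMulVec ψ) (redC_vecMulVec ψ)
  have hACB : vnEntropy hAC = vnEntropy hB :=
    vnEntropy_mul_conjTranspose_eq_transpose _ hAC hB (redAC_vecMulVec ψ) (redB_vecMulVec ψ)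
  linarith

/-- Entropic monogamy for pure tripartite states `ρ = ψψ⋆`:
`I(A:B) + I(A:C) ≤ 2 S(ρ_A)`, where `I(A:X) = S(ρ_A) + S(ρ_X) − S(ρ_{AX})`. -/
theorem mutual_information_monogamy
    (ψ : Fin dA × Fin dB × Fin dC → ℂ) (hψ : star ψ ⬝ᵥ ψ = 1)
    (hA : (redA (vecMulVec ψ (star ψ))).IsHermitian)
    (hB : (redB (vecMulVec ψ (star ψ))).IsHermitian)
    (hC : (redC (vecMulVec ψ (star ψ))).IsHermitian)
    (hAB : (redAB (vecMulVec ψ (star ψ))).IsHermitian)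
    (hAC : (redAC (vecMulVec ψ (star ψ))).IsHermitian) :
    (vnEntropy hA + vnEntropy hB - vnEntropy hAB) +
      (vnEntropy hA + vnEntropy hC - vnEntropy hAC) ≤ 2 * vnEntropy hA :=
  mutual_information_monogamy_general ψ hA hB hC hAB hAC
end
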